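/- arXiv:0811.3650 — 2 statements merged into one kernel-verified Lean document; each statement's English description precedes it below -/
import Mathlib

section
/- Let f : ℤ → ℝ and let a < b be integers. If ∑_{t=a+1}^{b} f(t) · (η(t) − η(t−1)) = 0 for every function η : ℤ → ℝ with η(a) = η(b) = 0, then f(t) = f(a+1) for all t with a+1 ≤ t ≤ b. -/
open Finset

lemma sum_Icc_mul_sub_indicator_singleton {R : Type*} [Ring R] (f : ℤ → R) {a b s : ℤ}
    (has : a < s) (hsb : s < b) :
    ∑ t ∈ Icc (a + 1) b,
        f t * ((if t = s then 1 else 0) - (if t - 1 = s then 1 else 0)) = f s - f (s + 1) := by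
  simp only [mul_sub, sum_sub_distrib, mul_ite, mul_one, mul_zero, sub_eq_iff_eq_add,
    sum_ite_eq', mem_Icc]
  rw [if_pos (by omega), if_pos (by omega), sub_add_cancel]

lemma Int.eq_of_forall_succ_eq {α : Type*} {f : ℤ → α} {m n : ℤ}
    (h : ∀ s, m ≤ s → s < n → f (s + 1) = f s) : ∀ t, m ≤ t → t ≤ n → f t = f m := by
  intro t hmt
  induction t, hmt using Int.leInduction with
  | base => exact fun _ => rfl
  | succ t hmt ih => exact fun htn => (h t hmt (by omega)).trans (ih (by omega))

theorem stmt_1_general (a b : ℤ) (f : ℤ → ℝ)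
    (h : ∀ η : ℤ → ℝ, η a = 0 → η b = 0 →
      ∑ t ∈ Finset.Icc (a + 1) b, f t * (η t - η (t - 1)) = 0) :
    ∀ t : ℤ, a + 1 ≤ t → t ≤ b → f t = f (a + 1) := by
  refine Int.eq_of_forall_succ_eq fun s has hsb => ?_
  have hbump := h (fun x => if x = s then 1 else 0) (if_neg (by omega)) (if_neg (by omega))
  rw [sum_Icc_mul_sub_indicator_singleton f (by omega) hsb] at hbump
  exact (sub_eq_zero.mp hbump).symm

/-- Discrete fundamental lemma of the calculus of variations (𝕋 = ℤ). -/
theorem stmt_1 (a b : ℤ) (hab : a < b) (f : ℤ → ℝ)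
    (h : ∀ η : ℤ → ℝ, η a = 0 → η b = 0 →
      ∑ t ∈ Finset.Icc (a + 1) b, f t * (η t - η (t - 1)) = 0) :
    ∀ t : ℤ, a + 1 ≤ t → t ≤ b → f t = f (a + 1) :=
  stmt_1_general a b f h
end

section
/- Let a < b be integers and f, g : ℤ × ℝ × ℝ → ℝ with (x,v) ↦ f(t,x,v) and (x,v) ↦ g(t,x,v) continuously differentiable for each t. Suppose y : {a,…,b} → ℝ is a local minimizer of I[y] = ∑_{t=a+1}^{b} f(t, y(t−1), y(t)−y(t−1)) subject to y(a) = α, y(b) = β and ∑_{t=a+1}^{b} g(t, y(t−1), y(t)−y(t−1)) = Λ, and suppose t ↦ g_v(t, y(t−1), y(t)−y(t−1)) − ∑_{τ=a+1}^{t} g_x(τ, y(τ−1), y(τ)−y(τ−1)) is not constant on {a+1,…,b}. Then there exists λ ∈ ℝ such that, with F = f − λg, the discrete Euler–Lagrange equation F_v(t, y(t−1), y(t)−y(t−1)) − F_v(t−1, y(t−2), y(t−1)−y(t−2)) = F_x(t, y(t−1), y(t)−y(t−1)) holds for all t ∈ {a+2,…,b}. -/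
/-!
For interior points `s, s₀` of `[a, b]`, perturb `y` in the two-parameter family
`y + ε₁ eₛ + ε₂ eₛ₀`. Since `ε = 0` minimizes `∑ f` on the level set of `∑ g`, the Lagrange
multiplier rule gives a nontrivial relation `A ∇(∑ g) + B ∇(∑ f) = 0` in `ε`; the components of
these gradients are the discrete Euler–Lagrange expressions at `s` and `s₀`, so their `2 × 2`
determinant vanishes. Normality yields an `s₀` where the expression for `g` is nonzero (otherwise
`g_v - ∑ g_x` would telescope to a constant), and `λ` is the ratio of the two expressions at `s₀`.
-/

open Finset

theorem hasStrictFDerivAt_of_hasDerivAt_partials {G Gx Gv : ℝ → ℝ → ℝ}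
    (hx : ∀ x v, HasDerivAt (fun x' => G x' v) (Gx x v) x)
    (hv : ∀ x v, HasDerivAt (fun v' => G x v') (Gv x v) v)
    {p : ℝ × ℝ} (hxc : ContinuousAt (fun q : ℝ × ℝ => Gx q.1 q.2) p)
    (hvc : ContinuousAt (fun q : ℝ × ℝ => Gv q.1 q.2) p) :
    HasStrictFDerivAt (fun q : ℝ × ℝ => G q.1 q.2)
      (Gx p.1 p.2 • ContinuousLinearMap.fst ℝ ℝ ℝ + Gv p.1 p.2 • ContinuousLinearMap.snd ℝ ℝ ℝ) p :=
  (hasStrictFDerivAt_uncurry_coprod (f := G)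
    (f₁ := fun x v => ContinuousLinearMap.toSpanSingleton ℝ (Gx x v))
    (f₂ := fun x v => ContinuousLinearMap.toSpanSingleton ℝ (Gv x v))
    (.of_forall fun q => (hx q.1 q.2).hasFDerivAt) (.of_forall fun q => (hv q.1 q.2).hasFDerivAt)
    (ContinuousLinearMap.toSpanSingletonCLE.continuous.continuousAt.comp hxc)
    (ContinuousLinearMap.toSpanSingletonCLE.continuous.continuousAt.comp hvc)).congr_fderiv
    (by ext <;> simp <;> exact one_smul ℝ _)

noncomputable def action (L : ℤ → ℝ → ℝ → ℝ) (a b : ℤ) (z : ℤ → ℝ) : ℝ :=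
  ∑ t ∈ Icc (a + 1) b, L t (z (t - 1)) (z t - z (t - 1))

/-- `∂ (action L a b) / ∂ (z s)` at `z = y`, for `a < s < b`. -/
noncomputable def actionPartial (Lx Lv : ℤ → ℝ → ℝ → ℝ) (y : ℤ → ℝ) (s : ℤ) : ℝ :=
  Lv s (y (s - 1)) (y s - y (s - 1)) + Lx (s + 1) (y s) (y (s + 1) - y s) -
    Lv (s + 1) (y s) (y (s + 1) - y s)

structure HasContinuousPartials (L Lx Lv : ℤ → ℝ → ℝ → ℝ) : Prop where
  hasDerivAt_fst : ∀ t x v, HasDerivAt (fun x' => L t x' v) (Lx t x v) x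
  hasDerivAt_snd : ∀ t x v, HasDerivAt (fun v' => L t x v') (Lv t x v) v
  continuous_fst : ∀ t, Continuous fun p : ℝ × ℝ => Lx t p.1 p.2
  continuous_snd : ∀ t, Continuous fun p : ℝ × ℝ => Lv t p.1 p.2

def IsConstrainedLocalMin (f g : ℤ → ℝ → ℝ → ℝ) (a b : ℤ) (y : ℤ → ℝ) : Prop :=
  ∃ δ > 0, ∀ z : ℤ → ℝ, z a = y a → z b = y b → action g a b z = action g a b y →
    (∀ t ∈ Icc a b, |z t - y t| < δ) → action f a b y ≤ action f a b z

section

variable {L Lx Lv : ℤ → ℝ → ℝ → ℝ} {a b : ℤ} {y : ℤ → ℝ}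
  {E : Type*} [NormedAddCommGroup E] [NormedSpace ℝ E]

theorem actionPartial_sub_one (t : ℤ) :
    actionPartial Lx Lv y (t - 1) = Lv (t - 1) (y (t - 2)) (y (t - 1) - y (t - 2)) +
      Lx t (y (t - 1)) (y t - y (t - 1)) - Lv t (y (t - 1)) (y t - y (t - 1)) := by
  simp only [actionPartial, sub_add_cancel, sub_sub, one_add_one_eq_two]

theorem HasContinuousPartials.hasStrictFDerivAt_action (hL : HasContinuousPartials L Lx Lv)
    (η : ℤ → E →L[ℝ] ℝ) :
    HasStrictFDerivAt (fun ε => action L a b fun u => y u + η u ε)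
      (∑ t ∈ Icc (a + 1) b, (Lx t (y (t - 1)) (y t - y (t - 1)) • η (t - 1) +
        Lv t (y (t - 1)) (y t - y (t - 1)) • (η t - η (t - 1)))) 0 := by
  refine HasStrictFDerivAt.fun_sum fun t _ => ?_
  set p : ℝ × ℝ := (y (t - 1), y t - y (t - 1))
  have hinner : HasStrictFDerivAt (fun ε => p + (η (t - 1)).prod (η t - η (t - 1)) ε)
      ((η (t - 1)).prod (η t - η (t - 1))) 0 :=
    ((η (t - 1)).prod (η t - η (t - 1))).hasStrictFDerivAt.const_add p
  have houter := hasStrictFDerivAt_of_hasDerivAt_partials (hL.hasDerivAt_fst t)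
    (hL.hasDerivAt_snd t) (hL.continuous_fst t).continuousAt (hL.continuous_snd t).continuousAt
    (p := p + (η (t - 1)).prod (η t - η (t - 1)) 0)
  convert houter.comp 0 hinner using 1
  · ext ε
    simp only [p, ContinuousLinearMap.prod_apply, Prod.mk_add_mk, sub_apply]
    congr 1
    ring
  · ext ε
    simp [p]

theorem sum_mul_single_eq_actionPartial {s : ℤ} (hs : s ∈ Ioo a b) :
    ∑ t ∈ Icc (a + 1) b, (Lx t (y (t - 1)) (y t - y (t - 1)) * (Pi.single s 1 : ℤ → ℝ) (t - 1) +
      Lv t (y (t - 1)) (y t - y (t - 1)) *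
        ((Pi.single s 1 : ℤ → ℝ) t - (Pi.single s 1 : ℤ → ℝ) (t - 1))) =
      actionPartial Lx Lv y s := by
  rw [mem_Ioo] at hs
  have hsplit : ∀ t ∈ Icc (a + 1) b,
      Lx t (y (t - 1)) (y t - y (t - 1)) * (Pi.single s 1 : ℤ → ℝ) (t - 1) +
        Lv t (y (t - 1)) (y t - y (t - 1)) *
          ((Pi.single s 1 : ℤ → ℝ) t - (Pi.single s 1 : ℤ → ℝ) (t - 1)) =
      (if t = s then Lv t (y (t - 1)) (y t - y (t - 1)) else 0) +
        if t = s + 1 then Lx t (y (t - 1)) (y t - y (t - 1)) - Lv t (y (t - 1)) (y t - y (t - 1))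
        else 0 := by
    intro t _
    simp only [Pi.single_apply]
    split_ifs <;> first | ring1 | (exfalso; omega)
  rw [sum_congr rfl hsplit, sum_add_distrib, sum_ite_eq', sum_ite_eq',
    if_pos (by rw [mem_Icc]; omega), if_pos (by rw [mem_Icc]; omega), actionPartial,
    add_sub_cancel_right]
  ring

theorem IsConstrainedLocalMin.isLocalMinOn {f g : ℤ → ℝ → ℝ → ℝ}
    (hy : IsConstrainedLocalMin f g a b y) {η : ℤ → E →L[ℝ] ℝ} (ha : η a = 0) (hb : η b = 0) :
    IsLocalMinOn (fun ε => action f a b fun u => y u + η u ε)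
      {ε | (action g a b fun u => y u + η u ε) = action g a b fun u => y u + η u 0} 0 := by
  obtain ⟨δ, hδ, hmin⟩ := hy
  have hsmall : ∀ᶠ ε in nhds (0 : E), ∀ u ∈ Icc a b, |η u ε| < δ :=
    (Filter.eventually_all_finset _).2 fun u _ => by
      simpa [← Real.norm_eq_abs] using
        ((η u).continuous.tendsto' 0 0 (map_zero _)).eventually (Metric.ball_mem_nhds 0 hδ)
  filter_upwards [nhdsWithin_le_nhds hsmall, self_mem_nhdsWithin] with ε hε hcon
  simp only [map_zero, add_zero] at hcon ⊢
  exact hmin _ (by simp [ha]) (by simp [hb]) hcon (by simpa using hε)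

theorem IsConstrainedLocalMin.actionPartial_mul_eq_mul {f g fx fv gx gv : ℤ → ℝ → ℝ → ℝ}
    (hy : IsConstrainedLocalMin f g a b y) (hf : HasContinuousPartials f fx fv)
    (hg : HasContinuousPartials g gx gv) {s s₀ : ℤ} (hs : s ∈ Ioo a b) (hs₀ : s₀ ∈ Ioo a b) :
    actionPartial fx fv y s * actionPartial gx gv y s₀ =
      actionPartial fx fv y s₀ * actionPartial gx gv y s := by
  set η : ℤ → ℝ × ℝ →L[ℝ] ℝ := fun u =>
    (Pi.single s 1 : ℤ → ℝ) u • ContinuousLinearMap.fst ℝ ℝ ℝ +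
      (Pi.single s₀ 1 : ℤ → ℝ) u • ContinuousLinearMap.snd ℝ ℝ ℝ
  have hη : ∀ u ∉ Ioo a b, η u = 0 := fun u hu => by
    simp [η, Pi.single_apply, show u ≠ s from fun h => hu (h ▸ hs),
      show u ≠ s₀ from fun h => hu (h ▸ hs₀)]
  obtain ⟨A, B, hAB, hmul⟩ := IsLocalExtrOn.exists_multipliers_of_hasStrictFDerivAt_1d
    (Or.inl (hy.isLocalMinOn (hη a (by simp)) (hη b (by simp))))
    (hg.hasStrictFDerivAt_action η) (hf.hasStrictFDerivAt_action η)
  have h₁ := congr($hmul (1, 0))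
  have h₂ := congr($hmul (0, 1))
  simp only [η, smul_add, add_apply, smul_apply, _root_.sum_apply, ContinuousLinearMap.coe_fst',
    ContinuousLinearMap.coe_snd', smul_eq_mul, mul_one, mul_zero, add_zero, zero_add, sub_apply,
    zero_apply] at h₁ h₂
  simp only [sum_mul_single_eq_actionPartial hs, sum_mul_single_eq_actionPartial hs₀] at h₁ h₂
  have hA : A * (actionPartial fx fv y s * actionPartial gx gv y s₀ -
      actionPartial fx fv y s₀ * actionPartial gx gv y s) = 0 := by
    linear_combination actionPartial fx fv y s * h₂ - actionPartial fx fv y s₀ * h₁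
  have hB : B * (actionPartial fx fv y s * actionPartial gx gv y s₀ -
      actionPartial fx fv y s₀ * actionPartial gx gv y s) = 0 := by
    linear_combination actionPartial gx gv y s₀ * h₁ - actionPartial gx gv y s * h₂
  by_contra hne
  have hdet := sub_ne_zero.2 hne
  exact hAB (Prod.ext ((mul_eq_zero.1 hA).resolve_right hdet)
    ((mul_eq_zero.1 hB).resolve_right hdet))

theorem exists_actionPartial_ne_zero
    (h : ¬ ∃ c : ℝ, ∀ t ∈ Icc (a + 1) b, Lv t (y (t - 1)) (y t - y (t - 1)) -
      ∑ τ ∈ Icc (a + 1) t, Lx τ (y (τ - 1)) (y τ - y (τ - 1)) = c) :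
    ∃ s ∈ Ioo a b, actionPartial Lx Lv y s ≠ 0 := by
  contrapose! h
  set Q : ℤ → ℝ := fun t => Lv t (y (t - 1)) (y t - y (t - 1)) -
    ∑ τ ∈ Icc (a + 1) t, Lx τ (y (τ - 1)) (y τ - y (τ - 1))
  have hstep : ∀ t, a + 1 ≤ t → Q (t + 1) = Q t - actionPartial Lx Lv y t := fun t ht => by
    simp only [Q, actionPartial]
    rw [← insert_Icc_right_eq_Icc_add_one (by omega), sum_insert (by rw [mem_Icc]; omega),
      add_sub_cancel_right]
    ring
  refine ⟨Q (a + 1), fun t ht => ?_⟩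
  rw [mem_Icc] at ht
  obtain ⟨hat, htb⟩ := ht
  show Q t = Q (a + 1)
  induction t, hat using Int.leInduction with
  | base => rfl
  | succ t ht ih => rw [hstep t ht, ih (by omega), h t (mem_Ioo.2 ⟨by omega, by omega⟩), sub_zero]

end

theorem stmt_6_general (a b : ℤ) (α β Λ : ℝ)
    (f g fx fv gx gv : ℤ → ℝ → ℝ → ℝ)
    (hfx : ∀ t x v, HasDerivAt (fun x' => f t x' v) (fx t x v) x)
    (hfv : ∀ t x v, HasDerivAt (fun v' => f t x v') (fv t x v) v)
    (hgx : ∀ t x v, HasDerivAt (fun x' => g t x' v) (gx t x v) x)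
    (hgv : ∀ t x v, HasDerivAt (fun v' => g t x v') (gv t x v) v)
    (hfxc : ∀ t, Continuous fun p : ℝ × ℝ => fx t p.1 p.2)
    (hfvc : ∀ t, Continuous fun p : ℝ × ℝ => fv t p.1 p.2)
    (hgxc : ∀ t, Continuous fun p : ℝ × ℝ => gx t p.1 p.2)
    (hgvc : ∀ t, Continuous fun p : ℝ × ℝ => gv t p.1 p.2)
    (y : ℤ → ℝ) (hya : y a = α) (hyb : y b = β)
    (hJ : ∑ t ∈ Finset.Icc (a + 1) b, g t (y (t - 1)) (y t - y (t - 1)) = Λ)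
    -- y is a local minimizer:
    (hmin : ∃ δ > 0, ∀ z : ℤ → ℝ, z a = α → z b = β →
      (∑ t ∈ Finset.Icc (a + 1) b, g t (z (t - 1)) (z t - z (t - 1))) = Λ →
      (∀ t ∈ Finset.Icc a b, |z t - y t| < δ) →
      (∑ t ∈ Finset.Icc (a + 1) b, f t (y (t - 1)) (y t - y (t - 1))) ≤
        ∑ t ∈ Finset.Icc (a + 1) b, f t (z (t - 1)) (z t - z (t - 1)))
    -- y is not an extremal of the constraint functional:
    (hnormal : ¬ ∃ c : ℝ, ∀ t ∈ Finset.Icc (a + 1) b,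
      gv t (y (t - 1)) (y t - y (t - 1)) -
        (∑ τ ∈ Finset.Icc (a + 1) t, gx τ (y (τ - 1)) (y τ - y (τ - 1))) = c) :
    ∃ lam : ℝ, ∀ t ∈ Finset.Icc (a + 2) b,
      (fv t (y (t - 1)) (y t - y (t - 1)) - lam * gv t (y (t - 1)) (y t - y (t - 1))) -
        (fv (t - 1) (y (t - 2)) (y (t - 1) - y (t - 2)) -
          lam * gv (t - 1) (y (t - 2)) (y (t - 1) - y (t - 2))) =
      fx t (y (t - 1)) (y t - y (t - 1)) - lam * gx t (y (t - 1)) (y t - y (t - 1)) := by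
  have hy : IsConstrainedLocalMin f g a b y := by
    obtain ⟨δ, hδ, H⟩ := hmin
    exact ⟨δ, hδ, fun z hza hzb hzg => H z (hza.trans hya) (hzb.trans hyb) (hzg.trans hJ)⟩
  obtain ⟨s₀, hs₀, hg₀⟩ := exists_actionPartial_ne_zero hnormal
  refine ⟨actionPartial fx fv y s₀ / actionPartial gx gv y s₀, fun t ht => ?_⟩
  have hs : t - 1 ∈ Ioo a b := by
    simp only [mem_Icc, mem_Ioo] at ht ⊢
    omega
  have hcross := hy.actionPartial_mul_eq_mul ⟨hfx, hfv, hfxc, hfvc⟩ ⟨hgx, hgv, hgxc, hgvc⟩ hs hs₀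
  have hlam : actionPartial fx fv y (t - 1) =
      actionPartial fx fv y s₀ / actionPartial gx gv y s₀ * actionPartial gx gv y (t - 1) := by
    rw [div_mul_eq_mul_div, eq_div_iff hg₀, ← hcross]
  rw [actionPartial_sub_one, actionPartial_sub_one] at hlam
  linear_combination -hlam

/-- Theorem 1 of the paper specialized to the time scale 𝕋 = ℤ. -/
theorem stmt_6 (a b : ℤ) (hab : a < b) (α β Λ : ℝ)
    (f g fx fv gx gv : ℤ → ℝ → ℝ → ℝ)
    (hfx : ∀ t x v, HasDerivAt (fun x' => f t x' v) (fx t x v) x)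
    (hfv : ∀ t x v, HasDerivAt (fun v' => f t x v') (fv t x v) v)
    (hgx : ∀ t x v, HasDerivAt (fun x' => g t x' v) (gx t x v) x)
    (hgv : ∀ t x v, HasDerivAt (fun v' => g t x v') (gv t x v) v)
    (hfxc : ∀ t, Continuous fun p : ℝ × ℝ => fx t p.1 p.2)
    (hfvc : ∀ t, Continuous fun p : ℝ × ℝ => fv t p.1 p.2)
    (hgxc : ∀ t, Continuous fun p : ℝ × ℝ => gx t p.1 p.2)
    (hgvc : ∀ t, Continuous fun p : ℝ × ℝ => gv t p.1 p.2)
    (y : ℤ → ℝ) (hya : y a = α) (hyb : y b = β)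
    (hJ : ∑ t ∈ Finset.Icc (a + 1) b, g t (y (t - 1)) (y t - y (t - 1)) = Λ)
    -- y is a local minimizer:
    (hmin : ∃ δ > 0, ∀ z : ℤ → ℝ, z a = α → z b = β →
      (∑ t ∈ Finset.Icc (a + 1) b, g t (z (t - 1)) (z t - z (t - 1))) = Λ →
      (∀ t ∈ Finset.Icc a b, |z t - y t| < δ) →
      (∑ t ∈ Finset.Icc (a + 1) b, f t (y (t - 1)) (y t - y (t - 1))) ≤
        ∑ t ∈ Finset.Icc (a + 1) b, f t (z (t - 1)) (z t - z (t - 1)))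
    -- y is not an extremal of the constraint functional:
    (hnormal : ¬ ∃ c : ℝ, ∀ t ∈ Finset.Icc (a + 1) b,
      gv t (y (t - 1)) (y t - y (t - 1)) -
        (∑ τ ∈ Finset.Icc (a + 1) t, gx τ (y (τ - 1)) (y τ - y (τ - 1))) = c) :
    ∃ lam : ℝ, ∀ t ∈ Finset.Icc (a + 2) b,
      (fv t (y (t - 1)) (y t - y (t - 1)) - lam * gv t (y (t - 1)) (y t - y (t - 1))) -
        (fv (t - 1) (y (t - 2)) (y (t - 1) - y (t - 2)) -
          lam * gv (t - 1) (y (t - 2)) (y (t - 1) - y (t - 2))) =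
      fx t (y (t - 1)) (y t - y (t - 1)) - lam * gx t (y (t - 1)) (y t - y (t - 1)) :=
  stmt_6_general a b α β Λ f g fx fv gx gv hfx hfv hgx hgv hfxc hfvc hgxc hgvc y hya hyb hJ hmin
    hnormal
end
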